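/- Let Ω ⊆ ℝⁿ be open, let F : Ω → ℝ be C³ with everywhere invertible Hessian, and suppose the gradient map ∇F is a bijection from Ω onto an open set P ⊆ ℝⁿ with C² inverse x ↦ ξ(x). Let u : P → ℝ be the Legendre transform u(x) = ⟨x, ξ(x)⟩ − F(ξ(x)), so that Hess u(x) = (Hess F(ξ(x)))⁻¹. Then for every C² function g : P → ℝ and every ξ ∈ Ω, Σ_{j,k} (Hess F(ξ))⁻¹_{jk} · ∂²(g ∘ ∇F)/∂ξ_j ∂ξ_k (ξ) = Σ_j ∂/∂x_j [ Σ_k (Hess u)⁻¹_{jk} ∂g/∂x_k ] evaluated at x = ∇F(ξ). -/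

import Mathlib

/-!
On `P` the hypothesis on `Hess u` says `(Hess u)⁻¹ = Hess F ∘ ξ`, so the `j`-th function
differentiated on the right is `ψ_j = Σ_k (Hess F ∘ ξ)_{jk} ∂_k g`, which is `C¹`. By the chain
rule and the symmetry of `Hess F`, `ψ_j ∘ ∇F = ∂_j (g ∘ ∇F)` on `Ω`. Since `D(∇F)(y) = Hess F(y)`
maps the `j`-th column of `(Hess F(y))⁻¹` to `e_j`, differentiating this identity at `y` in that
direction gives `∂_j ψ_j (∇F y) = Σ_m (Hess F(y))⁻¹_{mj} ∂_m ∂_j (g ∘ ∇F)(y)`, and summing over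
`j` gives the left-hand side.
-/

open Set Filter Topology InnerProductSpace Matrix

noncomputable def hessMat {n : ℕ} (f : EuclideanSpace ℝ (Fin n) → ℝ)
    (y : EuclideanSpace ℝ (Fin n)) : Matrix (Fin n) (Fin n) ℝ :=
  fun i j => fderiv ℝ (fun z => gradient f z) y (EuclideanSpace.single j 1) i

section Euclidean

variable {ι : Type*} [Fintype ι] [DecidableEq ι]

theorem EuclideanSpace.toDual_symm_apply (φ : StrongDual ℝ (EuclideanSpace ℝ ι)) (i : ι) :
    (toDual ℝ (EuclideanSpace ℝ ι)).symm φ i = φ (EuclideanSpace.single i 1) := by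
  simp [← InnerProductSpace.toDual_symm_apply, EuclideanSpace.inner_single_right]

theorem ContinuousLinearMap.apply_eq_sum_single {E : Type*} [NormedAddCommGroup E]
    [NormedSpace ℝ E] (L : EuclideanSpace ℝ ι →L[ℝ] E) (v : EuclideanSpace ℝ ι) :
    L v = ∑ i, v i • L (EuclideanSpace.single i 1) := by
  conv_lhs => rw [← (EuclideanSpace.basisFun ι ℝ).sum_repr v]
  simp [map_sum, map_smul]

end Euclidean

section Gradient

variable {E : Type*} [NormedAddCommGroup E] [InnerProductSpace ℝ E] [CompleteSpace E]
  {f : E → ℝ} {m k : WithTop ℕ∞}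

theorem ContDiffAt.gradient {x : E} (hf : ContDiffAt ℝ m f x) (hkm : k + 1 ≤ m) :
    ContDiffAt ℝ k (_root_.gradient f) x :=
  (toDual ℝ E).symm.contDiff.contDiffAt.comp x (hf.fderiv_right hkm)

theorem ContDiffOn.gradient {s : Set E} (hf : ContDiffOn ℝ m f s) (hs : IsOpen s)
    (hkm : k + 1 ≤ m) : ContDiffOn ℝ k (_root_.gradient f) s :=
  (toDual ℝ E).symm.contDiff.comp_contDiffOn (hf.fderiv_of_isOpen hs hkm)

end Gradient

section Hessian

variable {n : ℕ} {f : EuclideanSpace ℝ (Fin n) → ℝ} {y : EuclideanSpace ℝ (Fin n)}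

theorem hessMat_apply (i j : Fin n) :
    hessMat f y i j =
      fderiv ℝ (fderiv ℝ f) y (EuclideanSpace.single j 1) (EuclideanSpace.single i 1) := by
  have : gradient f = (toDual ℝ _).symm ∘ fderiv ℝ f := rfl
  rw [hessMat, this, LinearIsometryEquiv.comp_fderiv]
  exact EuclideanSpace.toDual_symm_apply _ i

theorem hessMat_symm (hf : ContDiffAt ℝ 2 f y) (i j : Fin n) :
    hessMat f y i j = hessMat f y j i := by
  rw [hessMat_apply, hessMat_apply]
  exact hf.isSymmSndFDerivAt (by simp) _ _

theorem hessMat_mulVec (v : EuclideanSpace ℝ (Fin n)) :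
    hessMat f y *ᵥ WithLp.ofLp v = WithLp.ofLp (fderiv ℝ (gradient f) y v) := by
  ext i
  rw [ContinuousLinearMap.apply_eq_sum_single (fderiv ℝ (gradient f) y) v]
  simp [mulVec, dotProduct, hessMat, mul_comm]

theorem ContDiffOn.hessMat_apply {s : Set (EuclideanSpace ℝ (Fin n))} {m k : WithTop ℕ∞}
    (hf : ContDiffOn ℝ m f s) (hs : IsOpen s) (hkm : k + 2 ≤ m) (i j : Fin n) :
    ContDiffOn ℝ k (fun z => _root_.hessMat f z i j) s := by
  have hgrad : ContDiffOn ℝ (k + 1) (_root_.gradient f) s :=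
    hf.gradient hs (by rwa [add_assoc, one_add_one_eq_two])
  exact ((EuclideanSpace.proj i).contDiff.comp_contDiffOn
    ((hgrad.fderiv_of_isOpen hs le_rfl).clm_apply contDiffOn_const))

theorem fderiv_comp_gradient_apply_single {g : EuclideanSpace ℝ (Fin n) → ℝ}
    (hf : ContDiffAt ℝ 2 f y) (hg : DifferentiableAt ℝ g (gradient f y)) (j : Fin n) :
    fderiv ℝ (fun z => g (gradient f z)) y (EuclideanSpace.single j 1) =
      ∑ k, hessMat f y j k * fderiv ℝ g (gradient f y) (EuclideanSpace.single k 1) := by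
  have hgrad : DifferentiableAt ℝ (gradient f) y :=
    (hf.gradient (k := 1) one_add_one_eq_two.le).differentiableAt one_ne_zero
  rw [fderiv_fun_comp y hg hgrad, ContinuousLinearMap.comp_apply,
    ContinuousLinearMap.apply_eq_sum_single (fderiv ℝ g _)]
  refine Finset.sum_congr rfl fun k _ => ?_
  rw [hessMat_symm hf, smul_eq_mul]
  rfl

theorem fderiv_apply_single_of_comp_gradient_eventuallyEq {φ G : EuclideanSpace ℝ (Fin n) → ℝ}
    (hH : IsUnit (hessMat f y)) (hφ : DifferentiableAt ℝ φ (gradient f y))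
    (hf : DifferentiableAt ℝ (gradient f) y) (hG : φ ∘ gradient f =ᶠ[𝓝 y] G) (j : Fin n) :
    fderiv ℝ φ (gradient f y) (EuclideanSpace.single j 1) =
      ∑ m, (hessMat f y)⁻¹ m j * fderiv ℝ G y (EuclideanSpace.single m 1) := by
  set v : EuclideanSpace ℝ (Fin n) := WithLp.toLp 2 ((hessMat f y)⁻¹ *ᵥ Pi.single j 1)
  have hv : fderiv ℝ (gradient f) y v = EuclideanSpace.single j 1 := by
    apply WithLp.ofLp_injective
    rw [← hessMat_mulVec, mulVec_mulVec, mul_nonsing_inv _ ((isUnit_iff_isUnit_det _).1 hH),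
      one_mulVec, PiLp.ofLp_single]
  calc fderiv ℝ φ (gradient f y) (EuclideanSpace.single j 1)
      = fderiv ℝ φ (gradient f y) (fderiv ℝ (gradient f) y v) := by rw [hv]
    _ = fderiv ℝ G y v := by rw [← hG.fderiv_eq, fderiv_comp y hφ hf]; rfl
    _ = _ := by rw [ContinuousLinearMap.apply_eq_sum_single]; simp [v]

end Hessian

theorem legendre_laplacian_change_of_variables_general {n : ℕ}
    (Ω P : Set (EuclideanSpace ℝ (Fin n))) (hΩ : IsOpen Ω) (hP : IsOpen P)
    (F : EuclideanSpace ℝ (Fin n) → ℝ)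
    (ξ : EuclideanSpace ℝ (Fin n) → EuclideanSpace ℝ (Fin n))
    (hF : ContDiffOn ℝ 3 F Ω)
    (hHessInv : ∀ y ∈ Ω, IsUnit (hessMat F y))
    (hbij : Set.BijOn (fun y => gradient F y) Ω P)
    (hξmem : ∀ x ∈ P, ξ x ∈ Ω)
    (hξleft : ∀ y ∈ Ω, ξ (gradient F y) = y)
    (hξC2 : ContDiffOn ℝ 2 ξ P)
    (u : EuclideanSpace ℝ (Fin n) → ℝ)
    (hHessu : ∀ x ∈ P, hessMat u x = (hessMat F (ξ x))⁻¹)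
    (g : EuclideanSpace ℝ (Fin n) → ℝ)
    (hg : ContDiffOn ℝ 2 g P) :
    ∀ y ∈ Ω,
      (∑ j, ∑ k, (hessMat F y)⁻¹ j k *
          fderiv ℝ (fun η => fderiv ℝ (fun ζ => g (gradient F ζ)) η
            (EuclideanSpace.single k 1)) y (EuclideanSpace.single j 1)) =
        ∑ j, fderiv ℝ
          (fun x => ∑ k, (hessMat u x)⁻¹ j k *
            fderiv ℝ g x (EuclideanSpace.single k 1))
          (gradient F y) (EuclideanSpace.single j 1) := by
  intro y hy
  have hyP : gradient F y ∈ P := hbij.mapsTo hy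
  have hF2 : ∀ η ∈ Ω, ContDiffAt ℝ 2 F η := fun η hη =>
    (hF.contDiffAt (hΩ.mem_nhds hη)).of_le (by norm_num)
  set ψ : Fin n → EuclideanSpace ℝ (Fin n) → ℝ := fun j x =>
    ∑ k, hessMat F (ξ x) j k * fderiv ℝ g x (EuclideanSpace.single k 1)
  have hψ_diff : ∀ j, DifferentiableAt ℝ (ψ j) (gradient F y) := fun j => by
    have hψ : ContDiffOn ℝ 1 (ψ j) P := ContDiffOn.sum fun k _ =>
      ((hF.hessMat_apply hΩ (by norm_num) j k).comp (hξC2.of_le (by norm_num))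
        fun x hx => hξmem x hx).mul
      ((hg.fderiv_of_isOpen hP (by norm_num)).clm_apply contDiffOn_const)
    exact (hψ.contDiffAt (hP.mem_nhds hyP)).differentiableAt one_ne_zero
  have hrhs_eq : ∀ j, (fun x => ∑ k, (hessMat u x)⁻¹ j k *
      fderiv ℝ g x (EuclideanSpace.single k 1)) =ᶠ[𝓝 (gradient F y)] ψ j := fun j => by
    filter_upwards [hP.mem_nhds hyP] with x hx
    rw [hHessu x hx, nonsing_inv_nonsing_inv _
      ((isUnit_iff_isUnit_det _).1 (hHessInv _ (hξmem x hx)))]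
  have hψ_comp : ∀ j, ψ j ∘ gradient F =ᶠ[𝓝 y]
      fun η => fderiv ℝ (fun ζ => g (gradient F ζ)) η (EuclideanSpace.single j 1) := fun j => by
    filter_upwards [hΩ.mem_nhds hy] with η hη
    simp only [Function.comp_apply, ψ, hξleft η hη]
    rw [fderiv_comp_gradient_apply_single (hF2 η hη)
      ((hg.contDiffAt (hP.mem_nhds (hbij.mapsTo hη))).differentiableAt two_ne_zero)]
  have hgrad_diff : DifferentiableAt ℝ (gradient F) y :=
    ((hF2 y hy).gradient (k := 1) one_add_one_eq_two.le).differentiableAt one_ne_zero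
  rw [Finset.sum_comm]
  refine Finset.sum_congr rfl fun j _ => ?_
  rw [(hrhs_eq j).fderiv_eq, fderiv_apply_single_of_comp_gradient_eventuallyEq (hHessInv y hy)
    (hψ_diff j) hgrad_diff (hψ_comp j)]

/-- Change of variables for the Laplace-type operator under the Legendre transform:
`Σ_{j,k} (Hess F(ξ))⁻¹_{jk} ∂²(g ∘ ∇F)/∂ξ_j∂ξ_k (ξ)
  = Σ_j ∂_{x_j} (Σ_k (Hess u)⁻¹_{jk} ∂g/∂x_k)` at `x = ∇F(ξ)`. -/
theorem legendre_laplacian_change_of_variables {n : ℕ}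
    (Ω P : Set (EuclideanSpace ℝ (Fin n))) (hΩ : IsOpen Ω) (hP : IsOpen P)
    (F : EuclideanSpace ℝ (Fin n) → ℝ)
    (ξ : EuclideanSpace ℝ (Fin n) → EuclideanSpace ℝ (Fin n))
    (hF : ContDiffOn ℝ 3 F Ω)
    (hHessInv : ∀ y ∈ Ω, IsUnit (hessMat F y))
    (hbij : Set.BijOn (fun y => gradient F y) Ω P)
    (hξmem : ∀ x ∈ P, ξ x ∈ Ω)
    (hξright : ∀ x ∈ P, gradient F (ξ x) = x)
    (hξleft : ∀ y ∈ Ω, ξ (gradient F y) = y)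
    (hξC2 : ContDiffOn ℝ 2 ξ P)
    (u : EuclideanSpace ℝ (Fin n) → ℝ)
    (hu : ∀ x, u x = (inner ℝ x (ξ x) : ℝ) - F (ξ x))
    (hHessu : ∀ x ∈ P, hessMat u x = (hessMat F (ξ x))⁻¹)
    (g : EuclideanSpace ℝ (Fin n) → ℝ)
    (hg : ContDiffOn ℝ 2 g P) :
    ∀ y ∈ Ω,
      (∑ j, ∑ k, (hessMat F y)⁻¹ j k *
          fderiv ℝ (fun η => fderiv ℝ (fun ζ => g (gradient F ζ)) η
            (EuclideanSpace.single k 1)) y (EuclideanSpace.single j 1)) =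
        ∑ j, fderiv ℝ
          (fun x => ∑ k, (hessMat u x)⁻¹ j k *
            fderiv ℝ g x (EuclideanSpace.single k 1))
          (gradient F y) (EuclideanSpace.single j 1) :=
  legendre_laplacian_change_of_variables_general Ω P hΩ hP F ξ hF hHessInv hbij hξmem hξleft hξC2 u
    hHessu g hg
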